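/- arXiv:2509.12942 — 5 statements merged into one kernel-verified Lean document; each statement's English description precedes it below -/
import Mathlib

section
/- Let A_i and A_j be two different attributes (i ≠ j), and let F_i ∈ ℱ_i and F_j ∈ ℱ_j be failprone sets of the corresponding failprone systems for believers in those attributes. Then |full(F_i) ∩ full(F_j)| = (n/(k_i k_j))·f_i·f_j, |partial(F_i) ∩ full(F_j)| ≤ p_i·α_i, and |F_i ∩ F_j| ≤ (n/(k_i k_j))·f_i·f_j + p_i·α_i + p_j·α_j. -/
/-- `f_i = ⌈k_i/3⌉ − 1`: number of attribute values of `A i` with full failures. -/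
noncomputable def fNum {d : ℕ} (A : Fin d → Type) [∀ j, Fintype (A j)] (i : Fin d) : ℤ :=
  ⌈(Fintype.card (A i) : ℚ) / 3⌉ - 1

/-- `α_i = ⌈n/(6k_i)⌉ − 1`: number of partial-failure processes per attribute value. -/
noncomputable def alphaNum {d : ℕ} (A : Fin d → Type) [∀ j, Fintype (A j)] (i : Fin d) : ℤ :=
  ⌈(Fintype.card (∀ j, A j) : ℚ) / (6 * (Fintype.card (A i) : ℚ))⌉ - 1

/-- `full(F) = 𝒫|_{A_i ∈ 𝒜'}`: the full failures determined by a set `𝒜'` of values of `A i`. -/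
def fullOf {d : ℕ} (A : Fin d → Type) [∀ j, Fintype (A j)] [∀ j, DecidableEq (A j)]
    (i : Fin d) (A' : Finset (A i)) : Finset (∀ j, A j) :=
  Finset.univ.filter (fun p => p i ∈ A')

/-- `partial(F) = ⊔_{a ∈ 𝒜_i ∖ 𝒜'} X_a`: the partial failures. -/
def partialOf {d : ℕ} (A : Fin d → Type) [∀ j, Fintype (A j)] [∀ j, DecidableEq (A j)]
    (i : Fin d) (A' : Finset (A i)) (X : A i → Finset (∀ j, A j)) : Finset (∀ j, A j) :=
  A'ᶜ.biUnion X

/-- `F` decomposes as `F = full(F) ⊔ partial(F)` with witnesses `A'` (of prescribed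
cardinality `fval`) and `X`, where `X a ⊆ 𝒫|_{A_i = a}` and `|X a| = α_i` for every
`a ∈ 𝒜_i ∖ 𝒜'`. -/
noncomputable def IsDecompGen {d : ℕ} (A : Fin d → Type) [∀ j, Fintype (A j)]
    [∀ j, DecidableEq (A j)] (i : Fin d) (fval : ℤ) (F : Finset (∀ j, A j))
    (A' : Finset (A i)) (X : A i → Finset (∀ j, A j)) : Prop :=
  (A'.card : ℤ) = fval ∧
  (∀ a ∈ A'ᶜ, X a ⊆ Finset.univ.filter (fun p => p i = a)) ∧
  (∀ a ∈ A'ᶜ, ((X a).card : ℤ) = alphaNum A i) ∧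
  F = fullOf A i A' ∪ partialOf A i A' X

/-- Membership in the failprone system `ℱ_i` for `A_i`-believers. -/
noncomputable def IsFailprone {d : ℕ} (A : Fin d → Type) [∀ j, Fintype (A j)]
    [∀ j, DecidableEq (A j)] (i : Fin d) (F : Finset (∀ j, A j)) : Prop :=
  ∃ A' X, IsDecompGen A i (fNum A i) F A' X

lemma card_inter_full {d : ℕ} (A : Fin d → Type) [∀ j, Fintype (A j)]
    [∀ j, DecidableEq (A j)] (i j : Fin d) (hij : i ≠ j)
    (A'i : Finset (A i)) (A'j : Finset (A j)) :
    ((fullOf A i A'i ∩ fullOf A j A'j).card : ℤ)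
      = (∏ l ∈ (Finset.univ.erase i).erase j, (Fintype.card (A l) : ℤ))
          * A'i.card * A'j.card := by
  classical
  set S : ∀ l, Finset (A l) :=
    Function.update (Function.update (fun l => (Finset.univ : Finset (A l))) i A'i) j A'j
    with hSdef
  have hSi : S i = A'i := by
    rw [hSdef, Function.update_of_ne hij, Function.update_self]
  have hSj : S j = A'j := by rw [hSdef, Function.update_self]
  have hS : ∀ l, l ≠ i → l ≠ j → S l = Finset.univ := by
    intro l hli hlj
    rw [hSdef, Function.update_of_ne hlj, Function.update_of_ne hli]
  have hset : fullOf A i A'i ∩ fullOf A j A'j = Fintype.piFinset S := by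
    ext p
    simp only [fullOf, Finset.mem_inter, Finset.mem_filter, Finset.mem_univ, true_and,
      Fintype.mem_piFinset]
    constructor
    · rintro ⟨h1, h2⟩ l
      by_cases hli : l = i
      · subst hli; rw [hSi]; exact h1
      by_cases hlj : l = j
      · subst hlj; rw [hSj]; exact h2
      · rw [hS l hli hlj]; exact Finset.mem_univ _
    · intro h
      refine ⟨?_, ?_⟩
      · have := h i; rwa [hSi] at this
      · have := h j; rwa [hSj] at this
  rw [hset, Fintype.card_piFinset]
  have hji : j ∈ Finset.univ.erase i := Finset.mem_erase.2 ⟨Ne.symm hij, Finset.mem_univ j⟩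
  rw [← Finset.mul_prod_erase Finset.univ (fun l => (S l).card) (Finset.mem_univ i),
    ← Finset.mul_prod_erase _ (fun l => (S l).card) hji]
  have hprod : ∏ l ∈ (Finset.univ.erase i).erase j, (S l).card
      = ∏ l ∈ (Finset.univ.erase i).erase j, Fintype.card (A l) := by
    refine Finset.prod_congr rfl ?_
    intro l hl
    rcases Finset.mem_erase.1 hl with ⟨hlj, hl'⟩
    rcases Finset.mem_erase.1 hl' with ⟨hli, _⟩
    rw [hS l hli hlj, Finset.card_univ]
  rw [hprod, hSi, hSj]
  push_cast
  ring

lemma card_partial_le {d : ℕ} (A : Fin d → Type) [∀ j, Fintype (A j)]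
    [∀ j, DecidableEq (A j)] (i : Fin d) (A' : Finset (A i))
    (X : A i → Finset (∀ l, A l))
    (hX : ∀ a ∈ A'ᶜ, ((X a).card : ℤ) = alphaNum A i) :
    ((partialOf A i A' X).card : ℤ)
      ≤ ((Fintype.card (A i) : ℤ) - A'.card) * alphaNum A i := by
  classical
  have h1 : (partialOf A i A' X).card ≤ ∑ a ∈ A'ᶜ, (X a).card :=
    Finset.card_biUnion_le
  have h2 : ((∑ a ∈ A'ᶜ, (X a).card : ℕ) : ℤ)
      = ((Fintype.card (A i) : ℤ) - A'.card) * alphaNum A i := by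
    push_cast
    rw [Finset.sum_congr rfl hX, Finset.sum_const, nsmul_eq_mul, Finset.card_compl]
    have hle : A'.card ≤ Fintype.card (A i) := Finset.card_le_univ A'
    push_cast [hle]
    ring
  calc ((partialOf A i A' X).card : ℤ) ≤ ((∑ a ∈ A'ᶜ, (X a).card : ℕ) : ℤ) := by
        exact_mod_cast h1
    _ = _ := h2

/-- For two different attributes `A i`, `A j` (`i ≠ j`) and failprone sets `F_i ∈ ℱ_i`,
`F_j ∈ ℱ_j` with decompositions witnessed by `(A'_i, X_i)` and `(A'_j, X_j)`:
`|full(F_i) ∩ full(F_j)| = (n/(k_i k_j))·f_i·f_j`,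
`|partial(F_i) ∩ full(F_j)| ≤ p_i·α_i`, and
`|F_i ∩ F_j| ≤ (n/(k_i k_j))·f_i·f_j + p_i·α_i + p_j·α_j`. -/
theorem stmt6 (d : ℕ) (A : Fin d → Type) [∀ j, Fintype (A j)] [∀ j, DecidableEq (A j)]
    (hk : ∀ j, 4 ≤ Fintype.card (A j)) (i j : Fin d) (hij : i ≠ j)
    (Fi Fj : Finset (∀ l, A l)) (A'i : Finset (A i)) (Xi : A i → Finset (∀ l, A l))
    (A'j : Finset (A j)) (Xj : A j → Finset (∀ l, A l))
    (hFi : IsDecompGen A i (fNum A i) Fi A'i Xi)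
    (hFj : IsDecompGen A j (fNum A j) Fj A'j Xj) :
    ((fullOf A i A'i ∩ fullOf A j A'j).card : ℤ)
        = (∏ l ∈ (Finset.univ.erase i).erase j, (Fintype.card (A l) : ℤ))
            * fNum A i * fNum A j
    ∧ ((partialOf A i A'i Xi ∩ fullOf A j A'j).card : ℤ)
        ≤ ((Fintype.card (A i) : ℤ) - fNum A i) * alphaNum A i
    ∧ ((Fi ∩ Fj).card : ℤ)
        ≤ (∏ l ∈ (Finset.univ.erase i).erase j, (Fintype.card (A l) : ℤ))
            * fNum A i * fNum A j
          + ((Fintype.card (A i) : ℤ) - fNum A i) * alphaNum A i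
          + ((Fintype.card (A j) : ℤ) - fNum A j) * alphaNum A j := by
  obtain ⟨hcardi, hXisub, hXicard, hFieq⟩ := hFi
  obtain ⟨hcardj, hXjsub, hXjcard, hFjeq⟩ := hFj
  have h1 : ((fullOf A i A'i ∩ fullOf A j A'j).card : ℤ)
      = (∏ l ∈ (Finset.univ.erase i).erase j, (Fintype.card (A l) : ℤ))
          * fNum A i * fNum A j := by
    rw [card_inter_full A i j hij A'i A'j, hcardi, hcardj]
  have hpi : ((partialOf A i A'i Xi).card : ℤ)
      ≤ ((Fintype.card (A i) : ℤ) - fNum A i) * alphaNum A i := by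
    rw [← hcardi]; exact card_partial_le A i A'i Xi hXicard
  have hpj : ((partialOf A j A'j Xj).card : ℤ)
      ≤ ((Fintype.card (A j) : ℤ) - fNum A j) * alphaNum A j := by
    rw [← hcardj]; exact card_partial_le A j A'j Xj hXjcard
  have h2 : ((partialOf A i A'i Xi ∩ fullOf A j A'j).card : ℤ)
      ≤ ((Fintype.card (A i) : ℤ) - fNum A i) * alphaNum A i := by
    refine le_trans ?_ hpi
    exact_mod_cast Finset.card_le_card (Finset.inter_subset_left)
  refine ⟨h1, h2, ?_⟩
  have hsub : Fi ∩ Fj ⊆ (fullOf A i A'i ∩ fullOf A j A'j)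
      ∪ (partialOf A i A'i Xi ∩ fullOf A j A'j) ∪ partialOf A j A'j Xj := by
    rw [hFieq, hFjeq]
    intro p hp
    rcases Finset.mem_inter.1 hp with ⟨hp1, hp2⟩
    rcases Finset.mem_union.1 hp2 with h | h
    · rcases Finset.mem_union.1 hp1 with h' | h'
      · exact Finset.mem_union_left _ (Finset.mem_union_left _ (Finset.mem_inter.2 ⟨h', h⟩))
      · exact Finset.mem_union_left _ (Finset.mem_union_right _ (Finset.mem_inter.2 ⟨h', h⟩))
    · exact Finset.mem_union_right _ h
  calc ((Fi ∩ Fj).card : ℤ)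
      ≤ (((fullOf A i A'i ∩ fullOf A j A'j)
          ∪ (partialOf A i A'i Xi ∩ fullOf A j A'j) ∪ partialOf A j A'j Xj).card : ℤ) := by
        exact_mod_cast Finset.card_le_card hsub
    _ ≤ ((fullOf A i A'i ∩ fullOf A j A'j).card : ℤ)
          + ((partialOf A i A'i Xi ∩ fullOf A j A'j).card : ℤ)
          + ((partialOf A j A'j Xj).card : ℤ) := by
        have := Finset.card_union_le
          ((fullOf A i A'i ∩ fullOf A j A'j) ∪ (partialOf A i A'i Xi ∩ fullOf A j A'j))
          (partialOf A j A'j Xj)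
        have h2' := Finset.card_union_le (fullOf A i A'i ∩ fullOf A j A'j)
          (partialOf A i A'i Xi ∩ fullOf A j A'j)
        exact_mod_cast le_trans this (Nat.add_le_add_right h2' _)
    _ ≤ _ := by rw [h1]; linarith [h2, hpj]
end

section
/- Let A_i and A_j be two different attributes (i ≠ j). Let F'_i ∈ ℱ_i and F'_j ∈ ℱ_j be failprone sets with partial(F'_i) ∩ partial(F'_j) = ∅, and put F'_{i,j} = F'_i ∩ F'_j. Then for any failprone sets F_i ∈ ℱ_i and F_j ∈ ℱ_j it holds that |F'_{i,j} ∖ (F_i ∪ F_j)| ≤ (n/(k_i k_j))·f_i·f_j + (p_i − f_i)·α_i + (p_j − f_j)·α_j. -/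
/-!
Write `A'_i, X_i` and `B'_i` for the full values and partial sets of `F'_i` and the full values
of `F_i`, and `m = n/(k_i k_j)`. A process `p ∈ F'_i ∩ F'_j` outside `F_i ∪ F_j` has
`p_i ∉ B'_i` and `p_j ∉ B'_j`, and since the partial failures of `F'_i` and `F'_j` are disjoint
it is a full failure of at least one of them. With `s_i = |A'_i ∩ B'_i|`, the processes full for
both lie in a box of `m (f_i - s_i)(f_j - s_j)` processes; those partial for `F'_j` lie in some
`X_j a` with `a` among the `k_j - 2 f_j + s_j` values outside `A'_j ∪ B'_j`, and each such `a`
contributes at most `min(α_j, m (f_i - s_i))`. Bounding `k_j - 2 f_j` of these minima by `α_j`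
and the remaining `s_j` by `m (f_i - s_i)` gives the claim; the surplus is `m s_i s_j ≥ 0`.
-/

open Finset

lemma card_filter_apply_mem_and_apply_mem {ι : Type*} [Fintype ι] [DecidableEq ι]
    {A : ι → Type*} [∀ l, Fintype (A l)] [∀ l, DecidableEq (A l)] {i j : ι} (hij : i ≠ j)
    (S : Finset (A i)) (T : Finset (A j)) :
    #{p : ∀ l, A l | p i ∈ S ∧ p j ∈ T}
      = (∏ l ∈ (univ.erase i).erase j, Fintype.card (A l)) * #S * #T := by
  set B : ∀ l, Finset (A l) := Function.update (Function.update (fun _ => univ) i S) j T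
  have hBi : B i = S := by simp [B, Function.update_of_ne hij]
  have hBj : B j = T := by simp [B]
  have hB : ∀ l, l ≠ i → l ≠ j → B l = univ := fun l hli hlj => by
    simp only [B]; rw [Function.update_of_ne hlj, Function.update_of_ne hli]
  have hpi : ({p : ∀ l, A l | p i ∈ S ∧ p j ∈ T} : Finset _) = Fintype.piFinset B := by
    ext p
    simp only [mem_filter, mem_univ, true_and, Fintype.mem_piFinset]
    refine ⟨fun ⟨hS, hT⟩ l => ?_, fun h => ⟨hBi ▸ h i, hBj ▸ h j⟩⟩
    by_cases hli : l = i
    · subst hli; rwa [hBi]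
    by_cases hlj : l = j
    · subst hlj; rwa [hBj]
    rw [hB l hli hlj]; exact mem_univ _
  have hj : j ∈ univ.erase i := mem_erase.2 ⟨hij.symm, mem_univ j⟩
  rw [hpi, Fintype.card_piFinset, ← mul_prod_erase _ _ (mem_univ i), ← mul_prod_erase _ _ hj,
    hBi, hBj, prod_congr rfl fun l hl => by
      rw [hB l (ne_of_mem_erase (mem_of_mem_erase hl)) (ne_of_mem_erase hl), card_univ]]
  ring

lemma two_mul_fNum_le {d : ℕ} (A : Fin d → Type) [∀ j, Fintype (A j)] (i : Fin d) :
    2 * fNum A i ≤ Fintype.card (A i) := by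
  have hceil := Int.ceil_lt_add_one ((Fintype.card (A i) : ℚ) / 3)
  have hk : (0 : ℚ) ≤ Fintype.card (A i) := Nat.cast_nonneg _
  have : ((2 * fNum A i : ℤ) : ℚ) ≤ (Fintype.card (A i) : ℤ) := by
    unfold fNum; push_cast; linarith
  exact_mod_cast this

section Decomposition

variable {d : ℕ} {A : Fin d → Type} [∀ j, Fintype (A j)] [∀ j, DecidableEq (A j)]

@[simp]
lemma mem_fullOf {i : Fin d} {A' : Finset (A i)} {p : ∀ l, A l} :
    p ∈ fullOf A i A' ↔ p i ∈ A' := by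
  simp [fullOf]

lemma mem_partialOf_iff {i : Fin d} {A' : Finset (A i)} {X : A i → Finset (∀ l, A l)}
    (hX : ∀ a ∈ A'ᶜ, X a ⊆ univ.filter (fun p => p i = a)) {p : ∀ l, A l} :
    p ∈ partialOf A i A' X ↔ p i ∉ A' ∧ p ∈ X (p i) := by
  simp only [partialOf, mem_biUnion, mem_compl]
  refine ⟨fun ⟨a, ha, hp⟩ => ?_, fun h => ⟨p i, h⟩⟩
  obtain rfl : p i = a := (mem_filter.1 (hX a (mem_compl.2 ha) hp)).2
  exact ⟨ha, hp⟩

lemma IsDecompGen.mem_iff {i : Fin d} {fval : ℤ} {F : Finset (∀ l, A l)} {A' : Finset (A i)}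
    {X : A i → Finset (∀ l, A l)} (hF : IsDecompGen A i fval F A' X) {p : ∀ l, A l} :
    p ∈ F ↔ p i ∈ A' ∨ p i ∉ A' ∧ p ∈ X (p i) := by
  rw [hF.2.2.2, mem_union, mem_fullOf, mem_partialOf_iff hF.2.1]

lemma inter_sdiff_union_subset {i j : Fin d} {fi fj : ℤ} {F'i F'j Fi Fj : Finset (∀ l, A l)}
    {A'i B'i : Finset (A i)} {A'j B'j : Finset (A j)}
    {Xi : A i → Finset (∀ l, A l)} {Xj : A j → Finset (∀ l, A l)}
    (hF'i : IsDecompGen A i fi F'i A'i Xi) (hF'j : IsDecompGen A j fj F'j A'j Xj)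
    (hdisj : partialOf A i A'i Xi ∩ partialOf A j A'j Xj = ∅)
    (hFi : fullOf A i B'i ⊆ Fi) (hFj : fullOf A j B'j ⊆ Fj) :
    (F'i ∩ F'j) \ (Fi ∪ Fj) ⊆
      ({p : ∀ l, A l | p i ∈ A'i \ B'i ∧ p j ∈ A'j \ B'j} : Finset _)
        ∪ (A'j ∪ B'j)ᶜ.biUnion (fun a => {p ∈ Xj a | p i ∈ A'i \ B'i})
        ∪ (A'i ∪ B'i)ᶜ.biUnion (fun a => {p ∈ Xi a | p j ∈ A'j \ B'j}) := by
  intro p hp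
  simp only [mem_sdiff, mem_inter, mem_union, not_or, hF'i.mem_iff, hF'j.mem_iff] at hp
  obtain ⟨⟨hpi, hpj⟩, hpFi, hpFj⟩ := hp
  have hBi : p i ∉ B'i := fun h => hpFi (hFi (mem_fullOf.2 h))
  have hBj : p j ∉ B'j := fun h => hpFj (hFj (mem_fullOf.2 h))
  have hnot_both : ¬ ((p i ∉ A'i ∧ p ∈ Xi (p i)) ∧ (p j ∉ A'j ∧ p ∈ Xj (p j))) := fun h => by
    rw [← mem_partialOf_iff hF'i.2.1, ← mem_partialOf_iff hF'j.2.1, ← mem_inter, hdisj] at h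
    exact notMem_empty p h
  simp only [mem_union, mem_filter, mem_univ, true_and, mem_biUnion, mem_compl, mem_sdiff]
  rcases hpi with hAi | hXi <;> rcases hpj with hAj | hXj
  · exact Or.inl (Or.inl ⟨⟨hAi, hBi⟩, hAj, hBj⟩)
  · exact Or.inl (Or.inr ⟨p j, not_or.2 ⟨hXj.1, hBj⟩, hXj.2, hAi, hBi⟩)
  · exact Or.inr ⟨p i, not_or.2 ⟨hXi.1, hBi⟩, hXi.2, hAj, hBj⟩
  · exact absurd ⟨hXi, hXj⟩ hnot_both

lemma card_biUnion_filter_le {i j : Fin d} (hij : i ≠ j) (S : Finset (A i)) (C : Finset (A j))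
    {X : A j → Finset (∀ l, A l)} {α : ℤ}
    (hX : ∀ a ∈ C, X a ⊆ univ.filter (fun p => p j = a)) (hα : ∀ a ∈ C, (#(X a) : ℤ) = α) :
    (#(C.biUnion fun a => {p ∈ X a | p i ∈ S}) : ℤ)
      ≤ #C * min α ((∏ l ∈ (univ.erase i).erase j, (Fintype.card (A l) : ℤ)) * #S) := by
  have hfiber : ∀ a ∈ C, (#{p ∈ X a | p i ∈ S} : ℤ)
      ≤ min α ((∏ l ∈ (univ.erase i).erase j, (Fintype.card (A l) : ℤ)) * #S) := by
    intro a ha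
    refine le_min ((Nat.cast_le.2 (card_filter_le _ _)).trans (hα a ha).le) ?_
    have hsub : {p ∈ X a | p i ∈ S}
        ⊆ ({p : ∀ l, A l | p i ∈ S ∧ p j ∈ ({a} : Finset (A j))} : Finset _) :=
      fun p hp => by
        rw [mem_filter] at hp
        simpa [hp.2] using (mem_filter.1 (hX a ha hp.1)).2
    have := card_le_card hsub
    rw [card_filter_apply_mem_and_apply_mem hij, card_singleton, mul_one] at this
    exact_mod_cast this
  calc (#(C.biUnion fun a => {p ∈ X a | p i ∈ S}) : ℤ)
      ≤ ∑ a ∈ C, (#{p ∈ X a | p i ∈ S} : ℤ) := by exact_mod_cast card_biUnion_le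
    _ ≤ ∑ _a ∈ C, min α ((∏ l ∈ (univ.erase i).erase j, (Fintype.card (A l) : ℤ)) * #S) :=
      sum_le_sum hfiber
    _ = _ := by rw [sum_const, nsmul_eq_mul]

lemma card_inter_sdiff_union_le {i j : Fin d} (hij : i ≠ j) {fi fj : ℤ}
    {F'i F'j Fi Fj : Finset (∀ l, A l)} {A'i B'i : Finset (A i)} {A'j B'j : Finset (A j)}
    {Xi : A i → Finset (∀ l, A l)} {Xj : A j → Finset (∀ l, A l)}
    (hF'i : IsDecompGen A i fi F'i A'i Xi) (hF'j : IsDecompGen A j fj F'j A'j Xj)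
    (hdisj : partialOf A i A'i Xi ∩ partialOf A j A'j Xj = ∅)
    (hFi : fullOf A i B'i ⊆ Fi) (hFj : fullOf A j B'j ⊆ Fj) :
    (#((F'i ∩ F'j) \ (Fi ∪ Fj)) : ℤ)
      ≤ (∏ l ∈ (univ.erase i).erase j, (Fintype.card (A l) : ℤ)) * #(A'i \ B'i) * #(A'j \ B'j)
        + #(A'j ∪ B'j)ᶜ * min (alphaNum A j)
            ((∏ l ∈ (univ.erase i).erase j, (Fintype.card (A l) : ℤ)) * #(A'i \ B'i))
        + #(A'i ∪ B'i)ᶜ * min (alphaNum A i)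
            ((∏ l ∈ (univ.erase i).erase j, (Fintype.card (A l) : ℤ)) * #(A'j \ B'j)) := by
  have hU := card_biUnion_filter_le hij (A'i \ B'i) (A'j ∪ B'j)ᶜ
    (fun a ha => hF'j.2.1 a (compl_subset_compl.2 subset_union_left ha))
    (fun a ha => hF'j.2.2.1 a (compl_subset_compl.2 subset_union_left ha))
  have hV := card_biUnion_filter_le hij.symm (A'j \ B'j) (A'i ∪ B'i)ᶜ
    (fun a ha => hF'i.2.1 a (compl_subset_compl.2 subset_union_left ha))
    (fun a ha => hF'i.2.2.1 a (compl_subset_compl.2 subset_union_left ha))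
  rw [erase_right_comm] at hV
  have hcard := (card_le_card (inter_sdiff_union_subset hF'i hF'j hdisj hFi hFj)).trans
    ((card_union_le _ _).trans (add_le_add_left (card_union_le _ _) _))
  rw [card_filter_apply_mem_and_apply_mem hij] at hcard
  have hcardZ := (Nat.cast_le (α := ℤ)).2 hcard
  push_cast at hcardZ
  linarith

end Decomposition

lemma card_compl_union_eq {α : Type*} [Fintype α] [DecidableEq α] (s t : Finset α) :
    (#(s ∪ t)ᶜ : ℤ) = Fintype.card α - #s - #t + #(s ∩ t) := by
  have h₁ := card_union_add_card_inter s t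
  have h₂ := card_add_card_compl (s ∪ t)
  omega

lemma card_sdiff_eq_sub_card_inter {α : Type*} [DecidableEq α] (s t : Finset α) :
    (#(s \ t) : ℤ) = #s - #(s ∩ t) := by
  have := card_sdiff_add_card_inter s t
  omega

lemma part_bounds_le {m k₁ k₂ f₁ f₂ s₁ s₂ α₁ α₂ : ℤ} (hm : 0 ≤ m) (hs₁ : 0 ≤ s₁) (hs₂ : 0 ≤ s₂)
    (hf₁ : 2 * f₁ ≤ k₁) (hf₂ : 2 * f₂ ≤ k₂) :
    m * (f₁ - s₁) * (f₂ - s₂) + (k₂ - f₂ - f₂ + s₂) * min α₂ (m * (f₁ - s₁))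
        + (k₁ - f₁ - f₁ + s₁) * min α₁ (m * (f₂ - s₂))
      ≤ m * f₁ * f₂ + (k₁ - f₁ - f₁) * α₁ + (k₂ - f₂ - f₂) * α₂ := by
  nlinarith [mul_le_mul_of_nonneg_left (min_le_left α₁ (m * (f₂ - s₂))) (by omega : 0 ≤ k₁ - 2 * f₁),
    mul_le_mul_of_nonneg_left (min_le_left α₂ (m * (f₁ - s₁))) (by omega : 0 ≤ k₂ - 2 * f₂),
    mul_le_mul_of_nonneg_left (min_le_right α₁ (m * (f₂ - s₂))) hs₁,
    mul_le_mul_of_nonneg_left (min_le_right α₂ (m * (f₁ - s₁))) hs₂,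
    mul_nonneg (mul_nonneg hm hs₁) hs₂]

theorem stmt7_general (d : ℕ) (A : Fin d → Type) [∀ j, Fintype (A j)] [∀ j, DecidableEq (A j)]
    (i j : Fin d) (hij : i ≠ j)
    (F'i F'j : Finset (∀ l, A l)) (A'i : Finset (A i)) (Xi : A i → Finset (∀ l, A l))
    (A'j : Finset (A j)) (Xj : A j → Finset (∀ l, A l))
    (hF'i : IsDecompGen A i (fNum A i) F'i A'i Xi)
    (hF'j : IsDecompGen A j (fNum A j) F'j A'j Xj)
    (hdisj : partialOf A i A'i Xi ∩ partialOf A j A'j Xj = ∅)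
    (Fi Fj : Finset (∀ l, A l))
    (hFi : IsFailprone A i Fi) (hFj : IsFailprone A j Fj) :
    (((F'i ∩ F'j) \ (Fi ∪ Fj)).card : ℤ)
      ≤ (∏ l ∈ (Finset.univ.erase i).erase j, (Fintype.card (A l) : ℤ))
          * fNum A i * fNum A j
        + (((Fintype.card (A i) : ℤ) - fNum A i) - fNum A i) * alphaNum A i
        + (((Fintype.card (A j) : ℤ) - fNum A j) - fNum A j) * alphaNum A j := by
  obtain ⟨B'i, Yi, hB'i, -, -, hEFi⟩ := hFi
  obtain ⟨B'j, Yj, hB'j, -, -, hEFj⟩ := hFj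
  have hcard := card_inter_sdiff_union_le hij hF'i hF'j hdisj
    (hEFi ▸ subset_union_left : fullOf A i B'i ⊆ Fi) (hEFj ▸ subset_union_left)
  have hDi : (#(A'i \ B'i) : ℤ) = fNum A i - #(A'i ∩ B'i) := by
    rw [card_sdiff_eq_sub_card_inter, hF'i.1]
  have hDj : (#(A'j \ B'j) : ℤ) = fNum A j - #(A'j ∩ B'j) := by
    rw [card_sdiff_eq_sub_card_inter, hF'j.1]
  rw [hDi, hDj, card_compl_union_eq, card_compl_union_eq, hF'i.1, hF'j.1, hB'i, hB'j] at hcard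
  exact hcard.trans (part_bounds_le (by positivity) (Nat.cast_nonneg _) (Nat.cast_nonneg _)
    (two_mul_fNum_le A i) (two_mul_fNum_le A j))

/-- Let `A i` and `A j` be two different attributes (`i ≠ j`). Let `F'_i ∈ ℱ_i` and
`F'_j ∈ ℱ_j` be failprone sets (with decompositions witnessed by `(A'_i, X_i)` and
`(A'_j, X_j)`) whose partial failures are disjoint, and put `F'_{i,j} = F'_i ∩ F'_j`.
Then for any failprone sets `F_i ∈ ℱ_i` and `F_j ∈ ℱ_j`:
`|F'_{i,j} ∖ (F_i ∪ F_j)| ≤ (n/(k_i k_j))·f_i·f_j + (p_i − f_i)·α_i + (p_j − f_j)·α_j`. -/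
theorem stmt7 (d : ℕ) (A : Fin d → Type) [∀ j, Fintype (A j)] [∀ j, DecidableEq (A j)]
    (hk : ∀ j, 4 ≤ Fintype.card (A j)) (i j : Fin d) (hij : i ≠ j)
    (F'i F'j : Finset (∀ l, A l)) (A'i : Finset (A i)) (Xi : A i → Finset (∀ l, A l))
    (A'j : Finset (A j)) (Xj : A j → Finset (∀ l, A l))
    (hF'i : IsDecompGen A i (fNum A i) F'i A'i Xi)
    (hF'j : IsDecompGen A j (fNum A j) F'j A'j Xj)
    (hdisj : partialOf A i A'i Xi ∩ partialOf A j A'j Xj = ∅)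
    (Fi Fj : Finset (∀ l, A l))
    (hFi : IsFailprone A i Fi) (hFj : IsFailprone A j Fj) :
    (((F'i ∩ F'j) \ (Fi ∪ Fj)).card : ℤ)
      ≤ (∏ l ∈ (Finset.univ.erase i).erase j, (Fintype.card (A l) : ℤ))
          * fNum A i * fNum A j
        + (((Fintype.card (A i) : ℤ) - fNum A i) - fNum A i) * alphaNum A i
        + (((Fintype.card (A j) : ℤ) - fNum A j) - fNum A j) * alphaNum A j :=
  stmt7_general d A i j hij F'i F'j A'i Xi A'j Xj hF'i hF'j hdisj Fi Fj hFi hFj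
end

section
/- For every attribute A_i, the failprone system ℱ_i for A_i-believers is Q³-resilient: for all F_1, F_2, F_3 ∈ ℱ_i, the union F_1 ∪ F_2 ∪ F_3 is a proper subset of 𝒫. -/
lemma fiber_card_eq {d : ℕ} (A : Fin d → Type) [∀ j, Fintype (A j)] [∀ j, DecidableEq (A j)]
    (i : Fin d) (a b : A i) :
    (Finset.univ.filter (fun p : ∀ j, A j => p i = a)).card
      = (Finset.univ.filter (fun p : ∀ j, A j => p i = b)).card := by
  apply Finset.card_bij (fun p _ => Function.update p i b)
  · intro p hp
    simp
  · intro p hp q hq h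
    simp only [Finset.mem_filter] at hp hq
    have h2 : Function.update p i a = Function.update q i a := by
      simpa [Function.update_idem] using congrArg (fun f => Function.update f i a) h
    calc p = Function.update p i a := by rw [← hp.2, Function.update_eq_self]
      _ = Function.update q i a := h2
      _ = q := by rw [← hq.2, Function.update_eq_self]
  · intro q hq
    simp only [Finset.mem_filter] at hq
    refine ⟨Function.update q i a, by simp, ?_⟩
    simp [Function.update_idem, ← hq.2, Function.update_eq_self]

lemma card_mul_fiber {d : ℕ} (A : Fin d → Type) [∀ j, Fintype (A j)] [∀ j, DecidableEq (A j)]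
    (i : Fin d) (a : A i) :
    Fintype.card (∀ j, A j)
      = Fintype.card (A i) * (Finset.univ.filter (fun p : ∀ j, A j => p i = a)).card := by
  classical
  have h := Finset.card_eq_sum_card_fiberwise
    (f := fun p : ∀ j, A j => p i) (s := Finset.univ) (t := Finset.univ)
    (fun x _ => Finset.mem_univ _)
  rw [← Finset.card_univ, h, Finset.sum_congr rfl (fun b _ => fiber_card_eq A i b a)]
  simp [Finset.sum_const, Finset.card_univ, mul_comm]

/-- **Q³ resilience of `ℱ_i`.**
For every attribute `A i`, the failprone system `ℱ_i` for `A_i`-believers is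
Q³-resilient: for all `F_1, F_2, F_3 ∈ ℱ_i` the union `F_1 ∪ F_2 ∪ F_3` is a proper
subset of the universe `𝒫`. -/
theorem stmt8 (d : ℕ) (A : Fin d → Type) [∀ j, Fintype (A j)] [∀ j, DecidableEq (A j)]
    (hk : ∀ j, 4 ≤ Fintype.card (A j)) (i : Fin d)
    (F1 F2 F3 : Finset (∀ j, A j))
    (h1 : IsFailprone A i F1) (h2 : IsFailprone A i F2) (h3 : IsFailprone A i F3) :
    F1 ∪ F2 ∪ F3 ⊂ Finset.univ := by
  classical
  obtain ⟨A1, X1, hc1, hs1, hx1, hF1⟩ := h1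
  obtain ⟨A2, X2, hc2, hs2, hx2, hF2⟩ := h2
  obtain ⟨A3, X3, hc3, hs3, hx3, hF3⟩ := h3
  have hk' : (4 : ℤ) ≤ Fintype.card (A i) := by exact_mod_cast hk i
  -- 3 f ≤ k - 1
  have h3f : 3 * fNum A i ≤ (Fintype.card (A i) : ℤ) - 1 := by
    have hc : (⌈(Fintype.card (A i) : ℚ) / 3⌉ : ℚ) < (Fintype.card (A i) : ℚ) / 3 + 1 :=
      Int.ceil_lt_add_one _
    have : (3 : ℚ) * (⌈(Fintype.card (A i) : ℚ) / 3⌉ : ℚ) < (Fintype.card (A i) : ℚ) + 3 := by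
      linarith
    have h2 : 3 * ⌈(Fintype.card (A i) : ℚ) / 3⌉ < (Fintype.card (A i) : ℤ) + 3 := by
      exact_mod_cast this
    unfold fNum
    omega
  -- find a outside all three A' sets
  have hcard : ((A1 ∪ A2 ∪ A3).card : ℤ) < Fintype.card (A i) := by
    have hu : (A1 ∪ A2 ∪ A3).card ≤ A1.card + A2.card + A3.card :=
      le_trans (Finset.card_union_le _ _)
        (by linarith [Finset.card_union_le A1 A2])
    have : ((A1 ∪ A2 ∪ A3).card : ℤ) ≤ 3 * fNum A i := by
      rw [← hc1] at h3f ⊢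
      have := hc2; have := hc3
      push_cast at hu
      linarith [hc2, hc3, (by exact_mod_cast hu : ((A1 ∪ A2 ∪ A3).card : ℤ) ≤ (A1.card : ℤ) + A2.card + A3.card)]
    linarith
  obtain ⟨a, ha⟩ : ∃ a, a ∉ A1 ∪ A2 ∪ A3 := by
    by_contra hcon
    push_neg at hcon
    have h : A1 ∪ A2 ∪ A3 = Finset.univ := Finset.eq_univ_iff_forall.mpr hcon
    rw [h, Finset.card_univ] at hcard
    exact lt_irrefl _ hcard
  simp only [Finset.mem_union, not_or] at ha
  obtain ⟨⟨ha1, ha2⟩, ha3⟩ := ha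
  set S := Finset.univ.filter (fun p : ∀ j, A j => p i = a) with hS
  -- S is nonempty
  have hne : ∀ j, Nonempty (A j) := fun j =>
    Fintype.card_pos_iff.mp (by have := hk j; omega)
  have hSne : 1 ≤ S.card := by
    have : Function.update (fun j => Classical.arbitrary (A j)) i a ∈ S := by
      simp [hS]
    exact Finset.card_pos.mpr ⟨_, this⟩
  -- each F meets S only in X _ a
  have key : ∀ (A' : Finset (A i)) (X : A i → Finset (∀ j, A j)) (F : Finset (∀ j, A j)),
      IsDecompGen A i (fNum A i) F A' X → a ∉ A' → F ∩ S ⊆ X a := by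
    rintro A' X F ⟨-, hs, -, rfl⟩ haA'
    intro p hp
    simp only [Finset.mem_inter, Finset.mem_union, fullOf, partialOf, Finset.mem_filter,
      Finset.mem_biUnion, hS, Finset.mem_univ, true_and] at hp
    obtain ⟨h, hpa⟩ := hp
    rcases h with h | ⟨b, hb, hpb⟩
    · exact absurd (hpa ▸ h) haA'
    · have hpb' : p i = b := (Finset.mem_filter.mp (hs b hb hpb)).2
      rwa [← hpa, hpb']
  have k1 := key A1 X1 F1 ⟨hc1, hs1, hx1, hF1⟩ ha1
  have k2 := key A2 X2 F2 ⟨hc2, hs2, hx2, hF2⟩ ha2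
  have k3 := key A3 X3 F3 ⟨hc3, hs3, hx3, hF3⟩ ha3
  -- card bound: |(F1∪F2∪F3) ∩ S| ≤ 3α < |S|
  have hsub : (F1 ∪ F2 ∪ F3) ∩ S ⊆ X1 a ∪ X2 a ∪ X3 a := by
    intro p hp
    simp only [Finset.mem_inter, Finset.mem_union] at hp ⊢
    rcases hp with ⟨(h | h) | h, hpS⟩
    · exact Or.inl (Or.inl (k1 (Finset.mem_inter.mpr ⟨h, hpS⟩)))
    · exact Or.inl (Or.inr (k2 (Finset.mem_inter.mpr ⟨h, hpS⟩)))
    · exact Or.inr (k3 (Finset.mem_inter.mpr ⟨h, hpS⟩))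
  have hα1 := hx1 a (Finset.mem_compl.mpr ha1)
  have hα2 := hx2 a (Finset.mem_compl.mpr ha2)
  have hα3 := hx3 a (Finset.mem_compl.mpr ha3)
  have h3α : 3 * alphaNum A i < (S.card : ℤ) := by
    have hn := card_mul_fiber A i a
    have hkpos : 0 < Fintype.card (A i) := lt_of_lt_of_le (by norm_num) (hk i)
    have hkQ : (0 : ℚ) < (Fintype.card (A i) : ℚ) := by exact_mod_cast hkpos
    have hdiv : (Fintype.card (∀ j, A j) : ℚ) / (6 * (Fintype.card (A i) : ℚ))
        = (S.card : ℚ) / 6 := by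
      rw [hn]
      push_cast
      field_simp
      ring
    have hc : (⌈(S.card : ℚ) / 6⌉ : ℚ) < (S.card : ℚ) / 6 + 1 := Int.ceil_lt_add_one _
    have hSQ : (1 : ℚ) ≤ (S.card : ℚ) := by exact_mod_cast hSne
    have : (3 : ℚ) * (⌈(S.card : ℚ) / 6⌉ - 1) < (S.card : ℚ) := by linarith
    unfold alphaNum
    rw [hdiv]
    exact_mod_cast this
  have hcardlt : ((F1 ∪ F2 ∪ F3) ∩ S).card < S.card := by
    have h1 : (((F1 ∪ F2 ∪ F3) ∩ S).card : ℤ) ≤ (X1 a ∪ X2 a ∪ X3 a).card := by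
      exact_mod_cast Finset.card_le_card hsub
    have h2 : ((X1 a ∪ X2 a ∪ X3 a).card : ℤ) ≤ 3 * alphaNum A i := by
      have hu : (X1 a ∪ X2 a ∪ X3 a).card ≤ (X1 a).card + (X2 a).card + (X3 a).card :=
        le_trans (Finset.card_union_le _ _)
          (by linarith [Finset.card_union_le (X1 a) (X2 a)])
      have hu' : ((X1 a ∪ X2 a ∪ X3 a).card : ℤ) ≤ ((X1 a).card : ℤ) + (X2 a).card + (X3 a).card := by
        exact_mod_cast hu
      linarith [hα1, hα2, hα3, hu']
    exact_mod_cast lt_of_le_of_lt (le_trans h1 h2) h3α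
  -- conclude
  rw [Finset.ssubset_univ_iff]
  intro h
  have : (F1 ∪ F2 ∪ F3) ∩ S = S := by rw [h]; exact Finset.univ_inter S
  rw [this] at hcardlt
  exact lt_irrefl _ hcardlt
end

section
/- Let d ≥ 2, let k_1, …, k_d be integers with k_l ≥ 4 for all l, and let n = ∏_{l=1}^d k_l. For each l set f_l = ⌈k_l/3⌉ − 1, p_l = k_l − f_l, and α_l = ⌈n/(6k_l)⌉ − 1. Then for any two distinct indices i ≠ j it holds that (n/k_i)·f_i + (n/k_j)·f_j + (2p_i − f_i)·α_i + (2p_j − f_j)·α_j < n. -/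
lemma ceil_div_bounds (m c : ℤ) (hc : 0 < c) :
    m ≤ c * ⌈(m : ℚ) / (c : ℚ)⌉ ∧ c * ⌈(m : ℚ) / (c : ℚ)⌉ ≤ m + c - 1 := by
  have hcq : (0 : ℚ) < (c : ℚ) := by exact_mod_cast hc
  have h1 := Int.le_ceil ((m : ℚ) / (c : ℚ))
  have h2 := Int.ceil_lt_add_one ((m : ℚ) / (c : ℚ))
  constructor
  · have : (m : ℚ) ≤ (c : ℚ) * (⌈(m : ℚ) / (c : ℚ)⌉ : ℚ) := by
      rw [div_le_iff₀ hcq] at h1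
      linarith [h1]
    exact_mod_cast this
  · have : ((c * ⌈(m : ℚ) / (c : ℚ)⌉ : ℤ) : ℚ) < ((m + c : ℤ) : ℚ) := by
      push_cast
      have := (mul_lt_mul_iff_right₀ hcq).2 h2
      rw [mul_add, mul_div_cancel₀ _ (ne_of_gt hcq)] at this
      linarith
    have hlt : (c * ⌈(m : ℚ) / (c : ℚ)⌉ : ℤ) < m + c := by exact_mod_cast this
    omega

/-- Let `d ≥ 2`, `k_1, …, k_d ≥ 4`, and `n = ∏ k_l`. With `f_l = ⌈k_l/3⌉ − 1`,
`p_l = k_l − f_l`, and `α_l = ⌈n/(6k_l)⌉ − 1`, for any two distinct indices `i ≠ j`: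
`(n/k_i)·f_i + (n/k_j)·f_j + (2p_i − f_i)·α_i + (2p_j − f_j)·α_j < n`,
where `n/k_i` is the integer `∏_{l ≠ i} k_l`. -/
theorem stmt11 (d : ℕ) (hd : 2 ≤ d) (k : Fin d → ℕ) (hk : ∀ l, 4 ≤ k l)
    (i j : Fin d) (hij : i ≠ j) :
    (∏ l ∈ Finset.univ.erase i, (k l : ℤ)) * (⌈(k i : ℚ) / 3⌉ - 1)
      + (∏ l ∈ Finset.univ.erase j, (k l : ℤ)) * (⌈(k j : ℚ) / 3⌉ - 1)
      + (2 * ((k i : ℤ) - (⌈(k i : ℚ) / 3⌉ - 1)) - (⌈(k i : ℚ) / 3⌉ - 1))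
          * (⌈(∏ l, (k l : ℚ)) / (6 * (k i : ℚ))⌉ - 1)
      + (2 * ((k j : ℤ) - (⌈(k j : ℚ) / 3⌉ - 1)) - (⌈(k j : ℚ) / 3⌉ - 1))
          * (⌈(∏ l, (k l : ℚ)) / (6 * (k j : ℚ))⌉ - 1)
      < ∏ l, (k l : ℤ) := by
  -- notation
  set Mi : ℤ := ∏ l ∈ Finset.univ.erase i, (k l : ℤ) with hMi
  set Mj : ℤ := ∏ l ∈ Finset.univ.erase j, (k l : ℤ) with hMj
  have hkipos : (0 : ℤ) < (k i : ℤ) := by exact_mod_cast Nat.lt_of_lt_of_le (by norm_num) (hk i)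
  have hkjpos : (0 : ℤ) < (k j : ℤ) := by exact_mod_cast Nat.lt_of_lt_of_le (by norm_num) (hk j)
  have hki4 : (4 : ℤ) ≤ (k i : ℤ) := by exact_mod_cast hk i
  have hkj4 : (4 : ℤ) ≤ (k j : ℤ) := by exact_mod_cast hk j
  have hni : (k i : ℤ) * Mi = ∏ l, (k l : ℤ) := Finset.mul_prod_erase _ (fun l => (k l : ℤ)) (Finset.mem_univ i)
  have hnj : (k j : ℤ) * Mj = ∏ l, (k l : ℤ) := Finset.mul_prod_erase _ (fun l => (k l : ℤ)) (Finset.mem_univ j)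
  have hMipos : (0 : ℤ) < Mi := Finset.prod_pos (fun l _ => by
    exact_mod_cast Nat.lt_of_lt_of_le (by norm_num) (hk l))
  have hMjpos : (0 : ℤ) < Mj := Finset.prod_pos (fun l _ => by
    exact_mod_cast Nat.lt_of_lt_of_le (by norm_num) (hk l))
  -- rewrite the big ceiling arguments
  have hprodQ : (∏ l, (k l : ℚ)) = ((∏ l, (k l : ℤ) : ℤ) : ℚ) := by push_cast; ring
  have hargi : (∏ l, (k l : ℚ)) / (6 * (k i : ℚ)) = ((Mi : ℤ) : ℚ) / (6 : ℚ) := by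
    rw [hprodQ, ← hni]
    have : ((k i : ℕ) : ℚ) ≠ 0 := Nat.cast_ne_zero.mpr (by have := hk i; omega)
    push_cast
    field_simp
  have hargj : (∏ l, (k l : ℚ)) / (6 * (k j : ℚ)) = ((Mj : ℤ) : ℚ) / (6 : ℚ) := by
    rw [hprodQ, ← hnj]
    have : ((k j : ℕ) : ℚ) ≠ 0 := Nat.cast_ne_zero.mpr (by have := hk j; omega)
    push_cast
    field_simp
  rw [hargi, hargj]
  -- ceiling bounds
  have hFi := ceil_div_bounds (k i : ℤ) 3 (by norm_num)
  have hFj := ceil_div_bounds (k j : ℤ) 3 (by norm_num)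
  have hAi := ceil_div_bounds Mi 6 (by norm_num)
  have hAj := ceil_div_bounds Mj 6 (by norm_num)
  push_cast at hFi hFj hAi hAj
  set Fi : ℤ := ⌈(k i : ℚ) / 3⌉ with hFi'
  set Fj : ℤ := ⌈(k j : ℚ) / 3⌉ with hFj'
  set Ai : ℤ := ⌈((Mi : ℤ) : ℚ) / (6 : ℚ)⌉ with hAi'
  set Aj : ℤ := ⌈((Mj : ℤ) : ℚ) / (6 : ℚ)⌉ with hAj'
  obtain ⟨hFi1, hFi2⟩ := hFi
  obtain ⟨hFj1, hFj2⟩ := hFj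
  obtain ⟨hAi1, hAi2⟩ := hAi
  obtain ⟨hAj1, hAj2⟩ := hAj
  rw [← hni]
  -- key nonlinear facts
  have hAi1' : 1 ≤ Ai := by nlinarith
  have hAj1' : 1 ≤ Aj := by nlinarith
  have h1 : (2 * (k i : ℤ) - 3 * Fi + 3) * ((Mi - 1) - (6 * Ai - 6)) ≥ 0 :=
    mul_nonneg (by linarith) (by linarith)
  have h2 : (2 * (k j : ℤ) - 3 * Fj + 3) * ((Mj - 1) - (6 * Aj - 6)) ≥ 0 :=
    mul_nonneg (by linarith) (by linarith)
  have h3 : Mi * ((k i : ℤ) + 2 - 3 * Fi) ≥ 0 := mul_nonneg (by linarith) (by linarith)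
  have h4 : Mj * ((k j : ℤ) + 2 - 3 * Fj) ≥ 0 := mul_nonneg (by linarith) (by linarith)
  have hnij : (k i : ℤ) * Mi = (k j : ℤ) * Mj := by rw [hni, hnj]
  nlinarith [h1, h2, h3, h4, hMipos, hMjpos, hki4, hkj4, hnij]
end

section
/- Let k ≥ 10 and d ≥ 3 be positive integers and let n = k^d. Then ⌈k/3 − 1⌉·k^{d−1} + ⌊2k/3 + 1⌋·⌈k^{d−1}/6 − 1⌉ > ⌈n/3 − 1⌉. -/
/-- Let `k ≥ 10`, `d ≥ 3`, and `n = k^d`. Then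
`⌈k/3 − 1⌉·k^{d−1} + ⌊2k/3 + 1⌋·⌈k^{d−1}/6 − 1⌉ > ⌈n/3 − 1⌉`. -/
theorem stmt15 (d k : ℕ) (hd : 3 ≤ d) (hk : 10 ≤ k) :
    ⌈(k : ℚ) / 3 - 1⌉ * ((k : ℤ) ^ (d - 1))
      + ⌊2 * (k : ℚ) / 3 + 1⌋ * ⌈((k : ℚ) ^ (d - 1)) / 6 - 1⌉
      > ⌈((k : ℚ) ^ d) / 3 - 1⌉ := by
  rw [gt_iff_lt, ← @Int.cast_lt ℚ]
  push_cast
  have hkq : (10 : ℚ) ≤ (k : ℚ) := by exact_mod_cast hk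
  set m : ℚ := (k : ℚ) ^ (d - 1) with hm
  have hmk : (k : ℚ) ^ 2 ≤ m := by
    rw [hm]
    exact pow_le_pow_right₀ (by linarith) (by omega)
  have hm100 : (100 : ℚ) ≤ m := by nlinarith
  have hd' : (k : ℚ) ^ d = (k : ℚ) * m := by
    rw [hm, ← pow_succ', Nat.sub_add_cancel (by omega : 1 ≤ d)]
  have h1 : ((⌈(k : ℚ) / 3 - 1⌉ : ℤ) : ℚ) ≥ (k : ℚ) / 3 - 1 := Int.le_ceil _
  have h2 : ((⌊2 * (k : ℚ) / 3 + 1⌋ : ℤ) : ℚ) ≥ 2 * (k : ℚ) / 3 := by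
    have := Int.sub_one_lt_floor (2 * (k : ℚ) / 3 + 1)
    linarith
  have h3 : ((⌈m / 6 - 1⌉ : ℤ) : ℚ) ≥ m / 6 - 1 := Int.le_ceil _
  have h4 : ((⌈(k : ℚ) ^ d / 3 - 1⌉ : ℤ) : ℚ) < (k : ℚ) ^ d / 3 := by
    have := Int.ceil_lt_add_one ((k : ℚ) ^ d / 3 - 1)
    linarith
  nlinarith [mul_nonneg (by linarith : (0:ℚ) ≤ ((⌈(k : ℚ) / 3 - 1⌉ : ℤ) : ℚ) - ((k:ℚ)/3 - 1)) (by linarith : (0:ℚ) ≤ m),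
    mul_nonneg (by linarith : (0:ℚ) ≤ ((⌊2 * (k : ℚ) / 3 + 1⌋ : ℤ) : ℚ) - 2 * (k:ℚ)/3) (by linarith : (0:ℚ) ≤ ((⌈m / 6 - 1⌉ : ℤ) : ℚ)),
    mul_nonneg (by linarith : (0:ℚ) ≤ 2 * (k:ℚ)/3) (by linarith : (0:ℚ) ≤ ((⌈m / 6 - 1⌉ : ℤ) : ℚ) - (m/6 - 1)),
    mul_le_mul_of_nonneg_left hmk (by linarith : (0:ℚ) ≤ (k:ℚ))]
end
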